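/- For all non-negative integers m, n and real q with 0 < q < 1: (-1)^m ∑_{n ≥ k_1 > ⋯ > k_m ≥ 1} ∏_{j=1}^m q^{k_j}/[k_j]_q = ∑_{n ≥ k_1 > ⋯ > k_m ≥ 1} (-1)^{k_1} q^{k_1(k_1+1)/2} C_q(n,k_1) ∏_{j=1}^m 1/[k_j]_q, where the sums are over strictly decreasing integer tuples. -/

import Mathlib

/-!
Both sides satisfy the recursion `X(n+1, m+1) = X(n, m+1) - q^(n+1)/[n+1]_q * X(n, m)` with
`X(n, 0) = 1` and `X(0, m+1) = 0`. For `(-1)^m Z` this is the split `k₁ = n+1` versus `k₁ ≤ n`.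
For `A`, split `C_q(n+1, k)` by q-Pascal. Then the q-absorption identity
`C_q(n, k-1)/[k]_q = C_q(n+1, k)/[n+1]_q` turns the new part into
`q^(n+1)/[n+1]_q` times `∑_k (-1)^k q^(k(k-1)/2) C_q(n+1, k) ∏ 1/[k_j]_q`.
This sum equals `-A(n, m)` after exchanging the order of summation, because the tails
`∑_{k > j} (-1)^k q^(k(k-1)/2) C_q(n+1, k) = -(-1)^j q^(j(j+1)/2) C_q(n, j)` telescope by q-Pascal.
-/

/-- Gaussian binomial coefficient, vanishing unless `k ≤ n`. -/
noncomputable def qbinom (q : ℝ) (n k : ℕ) : ℝ :=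
  if k ≤ n then ∏ j ∈ Finset.Icc 1 k, (1 - q ^ (n - k + j)) / (1 - q ^ j) else 0

/-- The `q`-analog of a natural number: `[k]_q = (1-q^k)/(1-q)`. -/
noncomputable def qnum (q : ℝ) (k : ℕ) : ℝ := (1 - q ^ k) / (1 - q)

/-- `Z_n^>[{1}^m] = ∑_{n ≥ k₁ > ⋯ > k_m ≥ 1} ∏_j q^{k_j}/[k_j]_q`. -/
noncomputable def Zgt (q : ℝ) : ℕ → ℕ → ℝ
  | _, 0 => 1
  | n, m + 1 => ∑ k ∈ Finset.Icc 1 n, q ^ k / qnum q k * Zgt q (k - 1) m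

/-- `∑_{n ≥ k₁ > ⋯ > k_m ≥ 1} ∏_j 1/[k_j]_q`. -/
noncomputable def Hgt (q : ℝ) : ℕ → ℕ → ℝ
  | _, 0 => 1
  | n, m + 1 => ∑ k ∈ Finset.Icc 1 n, (1 / qnum q k) * Hgt q (k - 1) m

/-- `A_n^>[{1}^m] = ∑_{n ≥ k₁ > ⋯ > k_m ≥ 1} (-1)^{k₁} q^{k₁(k₁+1)/2} C_q(n,k₁)
    ∏_j 1/[k_j]_q`. -/
noncomputable def Agt (q : ℝ) (n : ℕ) : ℕ → ℝ
  | 0 => 1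
  | m + 1 => ∑ k ∈ Finset.Icc 1 n,
      (-1 : ℝ) ^ k * q ^ (k * (k + 1) / 2) * qbinom q n k *
        (1 / qnum q k) * Hgt q (k - 1) m

open Finset

noncomputable def qfac (q : ℝ) (n : ℕ) : ℝ := ∏ j ∈ Icc 1 n, (1 - q ^ j)

lemma qfac_succ (q : ℝ) (n : ℕ) : qfac q (n + 1) = qfac q n * (1 - q ^ (n + 1)) :=
  prod_Icc_succ_top (by omega) _

lemma qbinom_of_lt {q : ℝ} {n k : ℕ} (h : n < k) : qbinom q n k = 0 :=
  if_neg (by omega)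

lemma qbinom_zero_right (q : ℝ) (n : ℕ) : qbinom q n 0 = 1 := by
  simp [qbinom]

lemma triangle_succ_mul (k : ℕ) : (k + 1) * (k + 1 + 1) / 2 = k * (k + 1) / 2 + (k + 1) := by
  simpa [Nat.mul_comm] using Nat.triangle_succ (k + 1)

section
variable {q : ℝ} (hq : ∀ j ≠ 0, q ^ j ≠ 1)
include hq

lemma one_sub_pow_ne_zero {j : ℕ} (hj : j ≠ 0) : 1 - q ^ j ≠ 0 :=
  sub_ne_zero.2 (hq j hj).symm

lemma qfac_ne_zero (n : ℕ) : qfac q n ≠ 0 :=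
  prod_ne_zero_iff.2 fun j hj => one_sub_pow_ne_zero hq (by simp only [mem_Icc] at hj; omega)

lemma qbinom_eq_qfac_div {n k : ℕ} (h : k ≤ n) :
    qbinom q n k = qfac q n / (qfac q k * qfac q (n - k)) := by
  have upper : ∏ j ∈ Icc 1 k, (1 - q ^ (n - k + j)) = ∏ i ∈ Ioc (n - k) n, (1 - q ^ i) := by
    have shift : Ioc (n - k) n = (Icc 1 k).map (addLeftEmbedding (n - k)) := by
      rw [map_add_left_Icc]; ext; simp only [mem_Ioc, mem_Icc]; omega
    rw [shift, prod_map]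
    rfl
  have split : qfac q (n - k) * ∏ i ∈ Ioc (n - k) n, (1 - q ^ i) = qfac q n := by
    have hIcc (m : ℕ) : Icc 1 m = Ioc 0 m := Icc_add_one_left_eq_Ioc 0 m
    simp only [qfac, hIcc]
    exact prod_Ioc_consecutive _ (Nat.zero_le _) (Nat.sub_le n k)
  rw [qbinom, if_pos h, prod_div_distrib, upper, ← split, ← qfac]
  have := qfac_ne_zero hq (n - k)
  field_simp

lemma qbinom_self (n : ℕ) : qbinom q n n = 1 := by
  rw [qbinom, if_pos le_rfl, Nat.sub_self]
  exact prod_eq_one fun j hj => by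
    rw [zero_add, div_self (one_sub_pow_ne_zero hq (by simp only [mem_Icc] at hj; omega))]

lemma qbinom_succ_succ (n k : ℕ) :
    qbinom q (n + 1) (k + 1) = qbinom q n k + q ^ (k + 1) * qbinom q n (k + 1) := by
  rcases lt_trichotomy k n with h | rfl | h
  · obtain ⟨d, rfl⟩ := Nat.exists_eq_add_of_lt h
    rw [qbinom_eq_qfac_div hq (by omega), qbinom_eq_qfac_div hq (by omega),
      qbinom_eq_qfac_div hq (by omega), show k + d + 1 + 1 - (k + 1) = d + 1 by omega,
      show k + d + 1 - k = d + 1 by omega, show k + d + 1 - (k + 1) = d by omega,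
      qfac_succ, qfac_succ q k, qfac_succ q d]
    have := qfac_ne_zero hq (k + d + 1)
    have := qfac_ne_zero hq k
    have := qfac_ne_zero hq d
    have := one_sub_pow_ne_zero hq (j := k + 1) (by omega)
    have := one_sub_pow_ne_zero hq (j := d + 1) (by omega)
    field_simp
    ring
  · rw [qbinom_self hq, qbinom_self hq, qbinom_of_lt (by omega), mul_zero, add_zero]
  · rw [qbinom_of_lt (by omega), qbinom_of_lt h, qbinom_of_lt (by omega), mul_zero, add_zero]

lemma one_sub_pow_mul_qbinom_succ_right (n k : ℕ) :
    (1 - q ^ (k + 1)) * qbinom q n (k + 1) = (1 - q ^ (n - k)) * qbinom q n k := by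
  rcases lt_or_ge k n with h | h
  · obtain ⟨d, rfl⟩ := Nat.exists_eq_add_of_lt h
    rw [qbinom_eq_qfac_div hq (by omega), qbinom_eq_qfac_div hq (by omega),
      show k + d + 1 - k = d + 1 by omega, show k + d + 1 - (k + 1) = d by omega,
      qfac_succ q k, qfac_succ q d]
    have := qfac_ne_zero hq k
    have := qfac_ne_zero hq d
    have := one_sub_pow_ne_zero hq (j := k + 1) (by omega)
    have := one_sub_pow_ne_zero hq (j := d + 1) (by omega)
    field_simp
  · rw [qbinom_of_lt (by omega), Nat.sub_eq_zero_of_le h, pow_zero, sub_self, zero_mul, mul_zero]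

lemma qbinom_succ_succ' (n k : ℕ) :
    qbinom q (n + 1) (k + 1) = q ^ (n - k) * qbinom q n k + qbinom q n (k + 1) := by
  linear_combination qbinom_succ_succ hq n k - one_sub_pow_mul_qbinom_succ_right hq n k

lemma qbinom_div_qnum (n k : ℕ) :
    qbinom q n k / qnum q (k + 1) = qbinom q (n + 1) (k + 1) / qnum q (n + 1) := by
  rcases le_or_gt k n with h | h
  · rw [qbinom_eq_qfac_div hq h, qbinom_eq_qfac_div hq (by omega),
      show n + 1 - (k + 1) = n - k by omega, qnum, qnum, qfac_succ, qfac_succ]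
    have := qfac_ne_zero hq n
    have := qfac_ne_zero hq k
    have := qfac_ne_zero hq (n - k)
    have := one_sub_pow_ne_zero hq (j := 1) one_ne_zero
    have := one_sub_pow_ne_zero hq (j := k + 1) (by omega)
    have := one_sub_pow_ne_zero hq (j := n + 1) (by omega)
    field_simp
  · rw [qbinom_of_lt h, qbinom_of_lt (by omega), zero_div, zero_div]

lemma sum_Ioc_alternating_qbinom {n j : ℕ} (hj : j ≤ n + 1) :
    ∑ k ∈ Ioc j (n + 1), (-1 : ℝ) ^ k * q ^ (k * (k - 1) / 2) * qbinom q (n + 1) k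
      = -((-1 : ℝ) ^ j * q ^ (j * (j + 1) / 2) * qbinom q n j) := by
  set g : ℕ → ℝ := fun i => (-1 : ℝ) ^ i * q ^ (i * (i + 1) / 2) * qbinom q n i
  have step (i : ℕ) : (-1 : ℝ) ^ (i + 1) * q ^ ((i + 1) * (i + 1 - 1) / 2) * qbinom q (n + 1) (i + 1)
      = g (i + 1) - g i := by
    simp only [g]
    rw [qbinom_succ_succ hq, Nat.add_sub_cancel, Nat.mul_comm, triangle_succ_mul, pow_add]
    ring
  rw [← Ico_add_one_add_one_eq_Ioc, ← sum_Ico_add', sum_congr rfl fun i _ => step i,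
    sum_Ico_sub g hj]
  simp [g, qbinom_of_lt (Nat.lt_succ_self n)]

lemma sum_alternating_qbinom_mul_Hgt (n m : ℕ) :
    ∑ k ∈ Icc 1 (n + 1),
        (-1 : ℝ) ^ k * q ^ (k * (k - 1) / 2) * qbinom q (n + 1) k * Hgt q (k - 1) m
      = -Agt q n m := by
  cases m with
  | zero =>
    have tail := sum_Ioc_alternating_qbinom hq (Nat.zero_le (n + 1))
    rw [← Icc_add_one_left_eq_Ioc] at tail
    simpa [Hgt, Agt, qbinom_zero_right] using tail
  | succ m =>
    simp only [Hgt, Agt, mul_sum]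
    rw [sum_comm' (t' := Icc 1 n) (s' := fun j => Ioc j (n + 1)), ← sum_neg_distrib]
    · refine sum_congr rfl fun j hj => ?_
      rw [← sum_mul, sum_Ioc_alternating_qbinom hq (by simp only [mem_Icc] at hj; omega)]
      ring
    · intro k j
      simp only [mem_Icc, mem_Ioc]
      omega

lemma Agt_succ_succ (n m : ℕ) :
    Agt q (n + 1) (m + 1) = Agt q n (m + 1) - q ^ (n + 1) / qnum q (n + 1) * Agt q n m := by
  have split : ∀ k ∈ Icc 1 (n + 1),
      (-1 : ℝ) ^ k * q ^ (k * (k + 1) / 2) * qbinom q (n + 1) k * (1 / qnum q k) * Hgt q (k - 1) m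
        = (-1 : ℝ) ^ k * q ^ (k * (k + 1) / 2) * qbinom q n k * (1 / qnum q k) * Hgt q (k - 1) m
          + q ^ (n + 1) / qnum q (n + 1) *
            ((-1 : ℝ) ^ k * q ^ (k * (k - 1) / 2) * qbinom q (n + 1) k * Hgt q (k - 1) m) := by
    intro k hk
    obtain ⟨i, rfl⟩ : ∃ i, k = i + 1 := ⟨k - 1, by simp only [mem_Icc] at hk; omega⟩
    have hpow : q ^ (n + 1) = q ^ (i + 1) * q ^ (n - i) := by
      rw [← pow_add]; congr 1; simp only [mem_Icc] at hk; omega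
    rw [triangle_succ_mul, pow_add, Nat.add_sub_cancel, Nat.mul_comm i]
    linear_combination ((-1 : ℝ) ^ (i + 1) * Hgt q i m * q ^ ((i + 1) * i / 2) * q ^ (i + 1) /
        qnum q (i + 1)) * qbinom_succ_succ' hq n i
      + ((-1 : ℝ) ^ (i + 1) * Hgt q i m * q ^ ((i + 1) * i / 2) * q ^ (i + 1) *
        q ^ (n - i)) * qbinom_div_qnum hq n i
      - ((-1 : ℝ) ^ (i + 1) * Hgt q i m * q ^ ((i + 1) * i / 2) * qbinom q (n + 1) (i + 1) /
        qnum q (n + 1)) * hpow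
  rw [Agt, sum_congr rfl split, sum_add_distrib, ← mul_sum, sum_alternating_qbinom_mul_Hgt hq,
    sum_Icc_succ_top (by omega), qbinom_of_lt (Nat.lt_succ_self n), Agt]
  ring

end

lemma Zgt_succ_succ (q : ℝ) (n m : ℕ) :
    Zgt q (n + 1) (m + 1) = Zgt q n (m + 1) + q ^ (n + 1) / qnum q (n + 1) * Zgt q n m := by
  rw [Zgt, sum_Icc_succ_top (by omega), Nat.add_sub_cancel, Zgt]

theorem strict_duality (m n : ℕ) (q : ℝ) (hq0 : 0 < q) (hq1 : q < 1) :
    (-1 : ℝ) ^ m * Zgt q n m = Agt q n m := by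
  have hq : ∀ j ≠ 0, q ^ j ≠ 1 := fun j hj => (pow_lt_one₀ hq0.le hq1 hj).ne
  induction n generalizing m with
  | zero => cases m <;> simp [Zgt, Agt]
  | succ n ih =>
    cases m with
    | zero => simp [Zgt, Agt]
    | succ m =>
      rw [Zgt_succ_succ, Agt_succ_succ hq, ← ih, ← ih]
      ring
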